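/- arXiv:0903.0430 — 3 statements merged into one kernel-verified Lean document; each statement's English description precedes it below -/
import Mathlib

section
/- The function c¹(λ) defined piecewise by c¹(λ) = g(O_1) for 0 < λ < λ_1 and c¹(λ) = min{g(O_2), min{c ∈ [g(O_1), g(O_2)] : M_{12}(c) = λ}} for λ ≥ λ_1, where λ_1 = M_{12}(g(O_1)), is non-decreasing in λ, provided M_{12}: [g(O_1), g(O_2)] → ℝ is continuous. -/
/-!
Below `λ₁ = M g₁` the function sits at its least possible value `g₁`. For `λ₁ ≤ λ ≤ μ`, the
intermediate value theorem on `[g₁, e]` shows that every point `e` of the `μ`-level set lies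
above some point of the `λ`-level set, so the first hitting time of `λ` is at most that of `μ`;
an empty `μ`-level set gives the maximal value `g₂`.
-/

open Set

open Classical in
/-- The function `c¹(λ)`: equal to `g(O₁)` for `λ < λ₁ = M₁₂(g(O₁))`, and for
`λ ≥ λ₁` equal to `min{g(O₂), min{c ∈ [g(O₁), g(O₂)] : M₁₂(c) = λ}}`, with the
convention `c¹(λ) = g(O₂)` if the level set is empty. -/
noncomputable def cOne (g₁ g₂ : ℝ) (M : ℝ → ℝ) (lam : ℝ) : ℝ :=
  if lam < M g₁ then g₁
  else if ({c | c ∈ Set.Icc g₁ g₂ ∧ M c = lam}).Nonempty then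
    min g₂ (sInf {c | c ∈ Set.Icc g₁ g₂ ∧ M c = lam})
  else g₂

section cOne

variable {g₁ g₂ : ℝ} {M : ℝ → ℝ} {lam mu : ℝ}

lemma cOne_mem_Icc (hg : g₁ ≤ g₂) : cOne g₁ g₂ M lam ∈ Icc g₁ g₂ := by
  unfold cOne
  split_ifs with hlt hne
  · exact ⟨le_rfl, hg⟩
  · exact ⟨le_min hg (le_csInf hne fun c hc ↦ hc.1.1), min_le_left _ _⟩
  · exact ⟨hg, le_rfl⟩

lemma cOne_of_levelSet_nonempty (hlam : M g₁ ≤ lam)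
    (hne : {c | c ∈ Icc g₁ g₂ ∧ M c = lam}.Nonempty) :
    cOne g₁ g₂ M lam = min g₂ (sInf {c | c ∈ Icc g₁ g₂ ∧ M c = lam}) := by
  rw [cOne, if_neg hlam.not_gt, if_pos hne]

lemma cOne_of_levelSet_empty (hlam : M g₁ ≤ lam)
    (hempty : ¬ {c | c ∈ Icc g₁ g₂ ∧ M c = lam}.Nonempty) :
    cOne g₁ g₂ M lam = g₂ := by
  rw [cOne, if_neg hlam.not_gt, if_neg hempty]

lemma exists_levelSet_le_of_continuousOn (hM : ContinuousOn M (Icc g₁ g₂))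
    (hlam : M g₁ ≤ lam) (hmu : lam ≤ mu) {e : ℝ} (he : e ∈ Icc g₁ g₂) (hMe : M e = mu) :
    ∃ c ∈ {c | c ∈ Icc g₁ g₂ ∧ M c = lam}, c ≤ e := by
  obtain ⟨c, hc, hMc⟩ := intermediate_value_Icc he.1
    (hM.mono (Icc_subset_Icc_right he.2)) ⟨hlam, hMe ▸ hmu⟩
  exact ⟨c, ⟨⟨hc.1, hc.2.trans he.2⟩, hMc⟩, hc.2⟩

lemma sInf_levelSet_mono (hM : ContinuousOn M (Icc g₁ g₂)) (hlam : M g₁ ≤ lam)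
    (hmu : lam ≤ mu) (hne : {c | c ∈ Icc g₁ g₂ ∧ M c = mu}.Nonempty) :
    sInf {c | c ∈ Icc g₁ g₂ ∧ M c = lam} ≤ sInf {c | c ∈ Icc g₁ g₂ ∧ M c = mu} := by
  refine le_csInf hne fun e ⟨he, hMe⟩ ↦ ?_
  obtain ⟨c, hc, hce⟩ := exists_levelSet_le_of_continuousOn hM hlam hmu he hMe
  exact (csInf_le ⟨g₁, fun x hx ↦ hx.1.1⟩ hc).trans hce

end cOne

/-- If `M₁₂` is continuous on `[g(O₁), g(O₂)]`, then `c¹` is non-decreasing. -/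
theorem cOne_monotone (g₁ g₂ : ℝ) (hg : g₁ ≤ g₂) (M : ℝ → ℝ)
    (hM : ContinuousOn M (Set.Icc g₁ g₂)) :
    ∀ lam mu : ℝ, 0 < lam → lam ≤ mu → cOne g₁ g₂ M lam ≤ cOne g₁ g₂ M mu := by
  intro lam mu _ hle
  rcases lt_or_ge lam (M g₁) with hlt | hlam
  · rw [cOne, if_pos hlt]
    exact (cOne_mem_Icc hg).1
  by_cases hne : {c | c ∈ Icc g₁ g₂ ∧ M c = mu}.Nonempty
  · obtain ⟨e, he, hMe⟩ := hne
    obtain ⟨c, hc, -⟩ := exists_levelSet_le_of_continuousOn hM hlam hle he hMe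
    rw [cOne_of_levelSet_nonempty hlam ⟨c, hc⟩,
      cOne_of_levelSet_nonempty (hlam.trans hle) ⟨e, he, hMe⟩]
    exact min_le_min_left _ (sInf_levelSet_mono hM hlam hle ⟨e, he, hMe⟩)
  · rw [cOne_of_levelSet_empty (hlam.trans hle) hne]
    exact (cOne_mem_Icc hg).2
end

section
/- The function c²(λ) defined by c²(λ) = g(O_2) for 0 < λ < λ_2 and c²(λ) = max{g(O_1), max{c ∈ [g(O_1), g(O_2)] : M_{21}(c) = λ}} for λ ≥ λ_2, where λ_2 = M_{21}(g(O_2)), is non-increasing in λ, provided M_{21}: [g(O_1), g(O_2)] → ℝ is continuous. -/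
/-! Raising the level from `λ` to `μ ≥ λ ≥ M(g₂)` can only move the level set to the left:
by the intermediate value theorem on `[c, g₂]`, every point `c` of the `μ`-level set has a point
of the `λ`-level set to its right. Writing `c²(λ)` as `sup ({g₁} ∪ level set)` for `λ ≥ M(g₂)`
turns this into a comparison of suprema; for `λ < M(g₂)` the value `g₂` is an upper bound of
everything. -/

open Classical in
/-- The function `c²(λ)`: equal to `g(O₂)` for `λ < λ₂ = M₂₁(g(O₂))`, and for
`λ ≥ λ₂` equal to `max{g(O₁), max{c ∈ [g(O₁), g(O₂)] : M₂₁(c) = λ}}`, with the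
convention `c²(λ) = g(O₁)` if the level set is empty. -/
noncomputable def cTwo (g₁ g₂ : ℝ) (M : ℝ → ℝ) (lam : ℝ) : ℝ :=
  if lam < M g₂ then g₂
  else if ({c | c ∈ Set.Icc g₁ g₂ ∧ M c = lam}).Nonempty then
    max g₁ (sSup {c | c ∈ Set.Icc g₁ g₂ ∧ M c = lam})
  else g₁

open Set

theorem csSup_le_csSup_of_forall_exists_le {α : Type*} [ConditionallyCompleteLattice α]
    {s t : Set α} (hs : s.Nonempty) (ht : BddAbove t) (h : ∀ x ∈ s, ∃ y ∈ t, x ≤ y) :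
    sSup s ≤ sSup t :=
  csSup_le hs fun x hx =>
    let ⟨_, hy, hxy⟩ := h x hx
    hxy.trans (le_csSup ht hy)

theorem exists_ge_mem_levelSet_of_le {α δ : Type*} [ConditionallyCompleteLinearOrder α]
    [TopologicalSpace α] [OrderTopology α] [DenselyOrdered α] [LinearOrder δ]
    [TopologicalSpace δ] [OrderClosedTopology δ] {a b : α} {f : α → δ}
    (hf : ContinuousOn f (Icc a b)) {l m : δ} (hb : f b ≤ l) (hlm : l ≤ m) :
    ∀ c ∈ {c | c ∈ Icc a b ∧ f c = m}, ∃ d ∈ {c | c ∈ Icc a b ∧ f c = l}, c ≤ d := by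
  rintro c ⟨hc, rfl⟩
  obtain ⟨d, hd, rfl⟩ :=
    intermediate_value_Icc' hc.2 (hf.mono (Icc_subset_Icc_left hc.1)) ⟨hb, hlm⟩
  exact ⟨d, ⟨⟨hc.1.trans hd.1, hd.2⟩, rfl⟩, hd.1⟩

section cTwo

variable {g₁ g₂ : ℝ} {M : ℝ → ℝ} {lam : ℝ}

theorem cTwo_of_lt (h : lam < M g₂) : cTwo g₁ g₂ M lam = g₂ :=
  if_pos h

theorem cTwo_of_le (h : M g₂ ≤ lam) :
    cTwo g₁ g₂ M lam = sSup (insert g₁ {c | c ∈ Icc g₁ g₂ ∧ M c = lam}) := by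
  rw [cTwo, if_neg h.not_gt]
  split_ifs with hne
  · exact (csSup_insert (bddAbove_Icc.mono fun _ hc => hc.1) hne).symm
  · rw [not_nonempty_iff_eq_empty.1 hne, insert_empty_eq, csSup_singleton]

theorem bddAbove_insert_levelSet :
    BddAbove (insert g₁ {c | c ∈ Icc g₁ g₂ ∧ M c = lam}) :=
  (bddAbove_Icc.mono fun _ hc => hc.1).insert g₁

theorem cTwo_le_right (hg : g₁ ≤ g₂) : cTwo g₁ g₂ M lam ≤ g₂ := by
  rcases lt_or_ge lam (M g₂) with h | h
  · exact (cTwo_of_lt h).le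
  · rw [cTwo_of_le h]
    refine csSup_le (insert_nonempty _ _) ?_
    rintro c (rfl | hc)
    exacts [hg, hc.1.2]

end cTwo

/-- If `M₂₁` is continuous on `[g(O₁), g(O₂)]`, then `c²` is non-increasing. -/
theorem cTwo_antitone (g₁ g₂ : ℝ) (hg : g₁ ≤ g₂) (M : ℝ → ℝ)
    (hM : ContinuousOn M (Set.Icc g₁ g₂)) :
    ∀ lam mu : ℝ, 0 < lam → lam ≤ mu → cTwo g₁ g₂ M mu ≤ cTwo g₁ g₂ M lam := by
  intro lam mu _ hle
  rcases lt_or_ge mu (M g₂) with hmu | hmu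
  · rw [cTwo_of_lt hmu, cTwo_of_lt (hle.trans_lt hmu)]
  rcases lt_or_ge lam (M g₂) with hlam | hlam
  · rw [cTwo_of_lt hlam]
    exact cTwo_le_right hg
  rw [cTwo_of_le hmu, cTwo_of_le hlam]
  refine csSup_le_csSup_of_forall_exists_le (insert_nonempty _ _) bddAbove_insert_levelSet ?_
  rintro c (rfl | hc)
  · exact ⟨c, mem_insert c _, le_rfl⟩
  · obtain ⟨d, hd, hcd⟩ := exists_ge_mem_levelSet_of_le hM hlam hle c hc
    exact ⟨d, mem_insert_of_mem _ hd, hcd⟩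
end

section
/- Under the assumptions that the level sets of a continuous function M: [α, β] → ℝ at value λ are compact, the function λ ↦ min{β, min(M^{-1}(λ))} (defined as β when M^{-1}(λ) ∩ [α, β] = ∅) has left and right one-sided limits at every point where M has finitely many critical points, i.e., it is a regulated function on any interval avoiding the finite set of critical values of M. -/
/-!
Cutting `[α, β]` at the finitely many critical points of `M` leaves finitely many closed pieces,
on each of which `M` is strictly monotone (Darboux's theorem and the mean value theorem). On such
a piece `[a, b]` the first point where `M` takes the value `λ` moves monotonically with `λ`, as
long as `λ` does not cross `M a`; so the capped infimum over the piece is bounded and monotone on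
each side of every `λ`, and therefore has one-sided limits. Over `[α, β]` the capped infimum is
the minimum of those over the pieces.
-/

open Set Filter Topology

open Classical in
/-- `F(λ) = min{β, min(M⁻¹(λ) ∩ [α,β])}`, defined as `β` when the level set is
empty. -/
noncomputable def levelMin (α β : ℝ) (M : ℝ → ℝ) (lam : ℝ) : ℝ :=
  if ({c | c ∈ Set.Icc α β ∧ M c = lam}).Nonempty then
    min β (sInf {c | c ∈ Set.Icc α β ∧ M c = lam})
  else β

section OneSidedLimits

def HasOneSidedLimits {α β : Type*} [TopologicalSpace α] [Preorder α] [TopologicalSpace β]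
    (f : α → β) (x : α) : Prop :=
  (∃ L, Tendsto f (𝓝[<] x) (𝓝 L)) ∧ ∃ L, Tendsto f (𝓝[>] x) (𝓝 L)

variable {β : Type*}

theorem HasOneSidedLimits.min {α : Type*} [TopologicalSpace α] [Preorder α] [LinearOrder β]
    [TopologicalSpace β] [OrderClosedTopology β] {f g : α → β} {x : α}
    (hf : HasOneSidedLimits f x) (hg : HasOneSidedLimits g x) :
    HasOneSidedLimits (fun y => min (f y) (g y)) x :=
  ⟨⟨_, hf.1.choose_spec.min hg.1.choose_spec⟩, ⟨_, hf.2.choose_spec.min hg.2.choose_spec⟩⟩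

variable [ConditionallyCompleteLinearOrder β] [TopologicalSpace β] [OrderTopology β]

theorem hasOneSidedLimits_of_monotoneOn_Ioo_of_notMem {f : ℝ → β} {y : ℝ}
    (hf : ∀ p q, y ∉ Ioo p q → MonotoneOn f (Ioo p q))
    (hA : BddAbove (range f)) (hB : BddBelow (range f)) (x : ℝ) : HasOneSidedLimits f x := by
  obtain ⟨p, hpx, hyp⟩ : ∃ p < x, y ∉ Ioo p x := by
    rcases lt_or_ge y x with h | h
    · exact ⟨y, h, fun h' => h'.1.false⟩
    · exact ⟨x - 1, by linarith, fun h' => h'.2.not_ge h⟩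
  obtain ⟨q, hxq, hyq⟩ : ∃ q, x < q ∧ y ∉ Ioo x q := by
    rcases lt_or_ge x y with h | h
    · exact ⟨y, h, fun h' => h'.2.false⟩
    · exact ⟨x + 1, by linarith, fun h' => h'.1.not_ge h⟩
  exact ⟨⟨_, (hf p x hyp).tendsto_nhdsWithin_Ioo_left (nonempty_Ioo.2 hpx)
      (hA.mono (image_subset_range _ _))⟩,
    ⟨_, (hf x q hyq).tendsto_nhdsWithin_Ioo_right (nonempty_Ioo.2 hxq)
      (hB.mono (image_subset_range _ _))⟩⟩

theorem hasOneSidedLimits_of_antitoneOn_Ioo_of_notMem {f : ℝ → β} {y : ℝ}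
    (hf : ∀ p q, y ∉ Ioo p q → AntitoneOn f (Ioo p q))
    (hA : BddAbove (range f)) (hB : BddBelow (range f)) (x : ℝ) : HasOneSidedLimits f x :=
  hasOneSidedLimits_of_monotoneOn_Ioo_of_notMem (β := βᵒᵈ)
    (fun p q h => (hf p q h).dual_right) hB hA x

end OneSidedLimits

theorem strictMonoOn_or_strictAntiOn_of_deriv_ne_zero {D : Set ℝ} (hD : Convex ℝ D) {f : ℝ → ℝ}
    (hf : ContinuousOn f D) (hf' : ∀ x ∈ interior D, deriv f x ≠ 0) :
    StrictMonoOn f D ∨ StrictAntiOn f D := by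
  rcases hasDerivWithinAt_forall_lt_or_forall_gt_of_forall_ne hD.interior
      (fun x hx => (differentiableAt_of_deriv_ne_zero (hf' x hx)).hasDerivAt.hasDerivWithinAt)
      hf' with h | h
  · exact Or.inr (strictAntiOn_of_deriv_neg hD hf h)
  · exact Or.inl (strictMonoOn_of_deriv_pos hD hf h)

section CappedLevelInf

/-- Inserting the cap `β` into the level set makes the infimum meaningful without the case split
of `levelMin`. -/
noncomputable def cappedLevelInf (M : ℝ → ℝ) (a b β lam : ℝ) : ℝ :=
  sInf (insert β {c ∈ Icc a b | M c = lam})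

variable {M : ℝ → ℝ} {a b β lam : ℝ}

theorem bddBelow_insert_levelSet (M : ℝ → ℝ) (a b β lam : ℝ) :
    BddBelow (insert β {c ∈ Icc a b | M c = lam}) :=
  (bddBelow_Icc.mono (sep_subset _ _)).insert β

theorem cappedLevelInf_le_cap : cappedLevelInf M a b β lam ≤ β :=
  csInf_le (bddBelow_insert_levelSet M a b β lam) (mem_insert _ _)

theorem cappedLevelInf_le {c : ℝ} (hc : c ∈ Icc a b) (hMc : M c = lam) :
    cappedLevelInf M a b β lam ≤ c :=
  csInf_le (bddBelow_insert_levelSet M a b β lam) (mem_insert_of_mem _ ⟨hc, hMc⟩)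

theorem range_cappedLevelInf_subset : range (cappedLevelInf M a b β) ⊆ Icc (min a β) β := by
  rintro _ ⟨lam, rfl⟩
  refine ⟨le_csInf (insert_nonempty _ _) ?_, cappedLevelInf_le_cap⟩
  rintro y (rfl | ⟨hy, -⟩)
  exacts [min_le_right _ _, (min_le_left _ _).trans hy.1]

theorem levelMin_eq_cappedLevelInf (α β : ℝ) (M : ℝ → ℝ) :
    levelMin α β M = cappedLevelInf M α β β := by
  funext lam
  unfold levelMin cappedLevelInf
  split_ifs with h
  · rw [csInf_insert (bddBelow_Icc.mono (sep_subset _ _)) h]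
  · rw [not_nonempty_iff_eq_empty.1 h, insert_empty_eq, csInf_singleton]

theorem cappedLevelInf_eq_min {c : ℝ} (hac : a ≤ c) (hcb : c ≤ b) :
    cappedLevelInf M a b β lam =
      min (cappedLevelInf M a c β lam) (cappedLevelInf M c b β lam) := by
  rw [cappedLevelInf, ← Icc_union_Icc_eq_Icc hac hcb]
  simp only [mem_union, sep_union, insert_union_distrib]
  rw [csInf_union (bddBelow_insert_levelSet M a c β lam) (insert_nonempty _ _)
      (bddBelow_insert_levelSet M c b β lam) (insert_nonempty _ _)]
  rfl

theorem monotoneOn_cappedLevelInf {p q : ℝ} (hcont : ContinuousOn M (Icc a b))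
    (hmono : MonotoneOn M (Icc a b)) (hMa : M a ∉ Ioo p q) :
    MonotoneOn (cappedLevelInf M a b β) (Ioo p q) := by
  intro l₁ hl₁ l₂ hl₂ hle
  refine le_csInf (insert_nonempty _ _) ?_
  rintro y (rfl | ⟨hy, rfl⟩)
  · exact cappedLevelInf_le_cap
  have hMay : M a ≤ M y := hmono (left_mem_Icc.2 (hy.1.trans hy.2)) hy hy.1
  have hMal₁ : M a ≤ l₁ := not_lt.1 fun h => hMa ⟨hl₁.1.trans h, hMay.trans_lt hl₂.2⟩
  obtain ⟨x, hx, hMx⟩ := intermediate_value_Icc hy.1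
    (hcont.mono (Icc_subset_Icc_right hy.2)) ⟨hMal₁, hle⟩
  exact (cappedLevelInf_le ⟨hx.1, hx.2.trans hy.2⟩ hMx).trans hx.2

theorem cappedLevelInf_neg : cappedLevelInf (fun x => -M x) a b β (-lam) =
    cappedLevelInf M a b β lam := by
  simp only [cappedLevelInf, neg_inj]

theorem antitoneOn_cappedLevelInf {p q : ℝ} (hcont : ContinuousOn M (Icc a b))
    (hanti : AntitoneOn M (Icc a b)) (hMa : M a ∉ Ioo p q) :
    AntitoneOn (cappedLevelInf M a b β) (Ioo p q) := by
  have hneg := monotoneOn_cappedLevelInf (β := β) (p := -q) (q := -p) hcont.neg hanti.neg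
    fun h => hMa ⟨lt_of_neg_lt_neg h.2, lt_of_neg_lt_neg h.1⟩
  intro l₁ hl₁ l₂ hl₂ hle
  rw [← cappedLevelInf_neg, ← cappedLevelInf_neg (lam := l₁)]
  exact hneg ⟨neg_lt_neg hl₂.2, neg_lt_neg hl₂.1⟩ ⟨neg_lt_neg hl₁.2, neg_lt_neg hl₁.1⟩
    (neg_le_neg hle)

theorem hasOneSidedLimits_cappedLevelInf_of_deriv_ne_zero (hcont : ContinuousOn M (Icc a b))
    (hderiv : ∀ x ∈ Ioo a b, deriv M x ≠ 0) (lam : ℝ) :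
    HasOneSidedLimits (cappedLevelInf M a b β) lam := by
  have hA : BddAbove (range (cappedLevelInf M a b β)) :=
    bddAbove_Icc.mono range_cappedLevelInf_subset
  have hB : BddBelow (range (cappedLevelInf M a b β)) :=
    bddBelow_Icc.mono range_cappedLevelInf_subset
  rcases strictMonoOn_or_strictAntiOn_of_deriv_ne_zero (convex_Icc a b) hcont
      (by rwa [interior_Icc]) with h | h
  · exact hasOneSidedLimits_of_monotoneOn_Ioo_of_notMem
      (fun _ _ => monotoneOn_cappedLevelInf hcont h.monotoneOn) hA hB lam
  · exact hasOneSidedLimits_of_antitoneOn_Ioo_of_notMem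
      (fun _ _ => antitoneOn_cappedLevelInf hcont h.antitoneOn) hA hB lam

theorem hasOneSidedLimits_cappedLevelInf {S : Set ℝ} (hS : S.Finite)
    (hcont : ContinuousOn M (Icc a b)) (hcrit : ∀ x ∈ Ioo a b, deriv M x = 0 → x ∈ S)
    (lam : ℝ) : HasOneSidedLimits (cappedLevelInf M a b β) lam := by
  induction S, hS using Set.Finite.induction_on generalizing a b with
  | empty => exact hasOneSidedLimits_cappedLevelInf_of_deriv_ne_zero hcont hcrit lam
  | @insert c S _ _ ih =>
    by_cases hc : c ∈ Ioo a b
    · rw [show cappedLevelInf M a b β = _ from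
        funext fun _ => cappedLevelInf_eq_min hc.1.le hc.2.le]
      refine HasOneSidedLimits.min
        (ih (hcont.mono (Icc_subset_Icc_right hc.2.le)) fun x hx h0 => ?_)
        (ih (hcont.mono (Icc_subset_Icc_left hc.1.le)) fun x hx h0 => ?_)
      · exact (hcrit x ⟨hx.1, hx.2.trans hc.2⟩ h0).resolve_left hx.2.ne
      · exact (hcrit x ⟨hc.1.trans hx.1, hx.2⟩ h0).resolve_left hx.1.ne'
    · exact ih hcont fun x hx h0 => (hcrit x hx h0).resolve_left fun h => hc (h ▸ hx)

end CappedLevelInf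

theorem levelMin_regulated_general
    (α β : ℝ) (M : ℝ → ℝ)
    (hM : ContDiff ℝ 1 M)
    (hcrit : ({c | c ∈ Set.Icc α β ∧ deriv M c = 0}).Finite) :
    ∀ lam : ℝ, lam ∉ M '' {c | c ∈ Set.Icc α β ∧ deriv M c = 0} →
      (∃ L : ℝ, Filter.Tendsto (levelMin α β M)
          (nhdsWithin lam (Set.Iio lam)) (nhds L)) ∧
      (∃ L : ℝ, Filter.Tendsto (levelMin α β M)
          (nhdsWithin lam (Set.Ioi lam)) (nhds L)) := by
  intro lam _
  rw [levelMin_eq_cappedLevelInf]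
  exact hasOneSidedLimits_cappedLevelInf hcrit hM.continuous.continuousOn
    (fun x hx h0 => ⟨Ioo_subset_Icc_self hx, h0⟩) lam

/-- If `M : [α,β] → ℝ` is `C¹` with finitely many critical points, then the
function `λ ↦ min{β, min M⁻¹(λ)}` has one-sided (left and right) limits at
every `λ` that is not a critical value of `M`; i.e., it is regulated on any
interval avoiding the finitely many critical values. -/
theorem levelMin_regulated
    (α β : ℝ) (hab : α ≤ β) (M : ℝ → ℝ)
    (hM : ContDiff ℝ 1 M)
    (hcrit : ({c | c ∈ Set.Icc α β ∧ deriv M c = 0}).Finite) :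
    ∀ lam : ℝ, lam ∉ M '' {c | c ∈ Set.Icc α β ∧ deriv M c = 0} →
      (∃ L : ℝ, Filter.Tendsto (levelMin α β M)
          (nhdsWithin lam (Set.Iio lam)) (nhds L)) ∧
      (∃ L : ℝ, Filter.Tendsto (levelMin α β M)
          (nhdsWithin lam (Set.Ioi lam)) (nhds L)) :=
  levelMin_regulated_general α β M hM hcrit
end
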